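/- arXiv:1303.1389 — 2 statements merged into one kernel-verified Lean document; each statement's English description precedes it below -/
import Mathlib

section
/- The endomorphism algebra of the invisible defect I_W (the cohomology of the BRST operator Ψ ↦ d_{I_W}Ψ − (−1)^{|Ψ|}Ψ d_{I_W} acting on ℂ[x,x']-linear endomorphisms of I_W) in the case of one variable n = 1 is isomorphic as a ℂ[x]-algebra to the Jacobian ring ℂ[x]/(W'(x)). -/
open MvPolynomial

/-- The ring `ℂ[x,x']`, with `x = X 0`, `x' = X 1`. -/
noncomputable abbrev R2 : Type := MvPolynomial (Fin 2) ℂ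

noncomputable def xx : R2 := X 0
noncomputable def xx' : R2 := X 1

/-- `ℂ[x,x']` is a `ℂ[x]`-algebra via `x ↦ x`. -/
noncomputable instance : Algebra (Polynomial ℂ) R2 :=
  ((Polynomial.aeval (xx : R2)).toRingHom).toAlgebra

/-- Even `ℂ[x,x']`-linear endomorphisms `Ψ = (α, β)` of `I_W = ℂ[x,x']·1 ⊕ ℂ[x,x']·θ`
(`α` acting on the even part, `β` on the odd part) that commute with the twisted
differential `d = (x-x')θ^* + q·θ`, i.e. the even BRST cocycles.  The commutation
`dΨ = Ψd` amounts to `α·q = q·β` and `(x-x')·β = (x-x')·α`. -/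
noncomputable def evenCocycles (q : R2) : Subalgebra (Polynomial ℂ) (R2 × R2) where
  carrier := {p | p.1 * q = q * p.2 ∧ (xx - xx') * p.2 = (xx - xx') * p.1}
  mul_mem' := by
    rintro ⟨a1, a2⟩ ⟨b1, b2⟩ ⟨ha1, ha2⟩ ⟨hb1, hb2⟩
    constructor
    · show a1 * b1 * q = q * (a2 * b2)
      linear_combination b1 * ha1 + a2 * hb1
    · show (xx - xx') * (a2 * b2) = (xx - xx') * (a1 * b1)
      linear_combination a2 * hb2 + b1 * ha2
  add_mem' := by
    rintro ⟨a1, a2⟩ ⟨b1, b2⟩ ⟨ha1, ha2⟩ ⟨hb1, hb2⟩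
    constructor
    · show (a1 + b1) * q = q * (a2 + b2); linear_combination ha1 + hb1
    · show (xx - xx') * (a2 + b2) = (xx - xx') * (a1 + b1); linear_combination ha2 + hb2
  one_mem' := by constructor <;> simp
  zero_mem' := by constructor <;> simp
  algebraMap_mem' := fun p => by
    constructor <;> simp [Algebra.algebraMap_eq_smul_one]
  
/-- The ideal of even BRST coboundaries: `Ψ = dH + Hd` for an odd homotopy
`H = (h1 : θ ↦ h1·1, h2 : 1 ↦ h2·θ)`; explicitly `dH + Hd = (q·h1 + (x-x')·h2)·id`. -/
noncomputable def evenCoboundaries (q : R2) : Ideal (evenCocycles q) :=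
  Ideal.span {z : evenCocycles q | ∃ h1 h2 : R2,
    (z : R2 × R2) = (q * h1 + (xx - xx') * h2, q * h1 + (xx - xx') * h2)}

noncomputable def evQ : R2 →ₐ[ℂ] Polynomial ℂ := aeval ![Polynomial.X, Polynomial.X]
noncomputable def jQ : Polynomial ℂ →ₐ[ℂ] R2 := Polynomial.aeval xx

lemma ev_xx : evQ xx = Polynomial.X := by simp [evQ, xx]
lemma ev_xx' : evQ xx' = Polynomial.X := by simp [evQ, xx']

lemma ev_j (p : Polynomial ℂ) : evQ (jQ p) = p := by
  have : (evQ.comp jQ) p = (Polynomial.aeval (R := ℂ) Polynomial.X) p := by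
    rw [show evQ.comp jQ = Polynomial.aeval (R := ℂ) Polynomial.X from
      Polynomial.algHom_ext (by simp [jQ, ev_xx])]
  simpa using this

lemma xx_ne : xx ≠ xx' := by
  simp [xx, xx', MvPolynomial.X_injective.ne_iff]

-- divided difference existence
lemma dd (W : Polynomial ℂ) : ∃ q0 : R2,
    (xx - xx') * q0 = Polynomial.aeval xx W - Polynomial.aeval xx' W ∧
    evQ q0 = Polynomial.derivative W := by
  induction W using Polynomial.induction_on' with
  | add p r hp hr =>
    obtain ⟨a, ha1, ha2⟩ := hp; obtain ⟨b, hb1, hb2⟩ := hr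
    exact ⟨a + b, by rw [mul_add, ha1, hb1, map_add, map_add]; ring, by simp [ha2, hb2]⟩
  | monomial n a =>
    refine ⟨C a * ∑ i ∈ Finset.range n, xx ^ i * xx' ^ (n - 1 - i), ?_, ?_⟩
    · have := geom_sum₂_mul xx xx' n
      rw [Polynomial.aeval_monomial, Polynomial.aeval_monomial]
      calc (xx - xx') * (C a * ∑ i ∈ Finset.range n, xx ^ i * xx' ^ (n - 1 - i))
          = C a * ((∑ i ∈ Finset.range n, xx ^ i * xx' ^ (n - 1 - i)) * (xx - xx')) := by ring
        _ = C a * (xx ^ n - xx' ^ n) := by rw [this]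
        _ = _ := by simp [algebraMap_eq]; ring
    · rw [Polynomial.derivative_monomial]
      simp only [map_mul, map_sum, map_pow, ev_xx, ev_xx']
      have : ∀ i ∈ Finset.range n,
          Polynomial.X ^ i * Polynomial.X ^ (n - 1 - i) = (Polynomial.X : Polynomial ℂ) ^ (n-1) := by
        intro i hi
        rw [Finset.mem_range] at hi
        rw [← pow_add]
        congr 1
        omega
      rw [Finset.sum_congr rfl this, Finset.sum_const, Finset.card_range]
      rw [← Polynomial.C_mul_X_pow_eq_monomial, Polynomial.C_mul]
      simp only [evQ, aeval_C, Polynomial.algebraMap_eq, map_natCast, nsmul_eq_mul]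
      ring

noncomputable def σQ : R2 →ₐ[ℂ] R2 := aeval ![xx, xx]

lemma sigma_eq : σQ = jQ.comp evQ := by
  apply MvPolynomial.algHom_ext
  intro i
  fin_cases i <;> simp [σQ, jQ, evQ, xx]

lemma dvd_sub_sigma (f : R2) : (xx - xx') ∣ f - σQ f := by
  induction f using MvPolynomial.induction_on with
  | C a => simp [σQ]
  | add p r hp hr =>
    have : p + r - σQ (p + r) = (p - σQ p) + (r - σQ r) := by rw [map_add]; ring
    rw [this]; exact dvd_add hp hr
  | mul_X p i hp =>
    have : p * X i - σQ (p * X i) = (p - σQ p) * X i + σQ p * (X i - xx) := by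
      rw [map_mul, show σQ (X i) = xx from by fin_cases i <;> simp [σQ]]
      ring
    rw [this]
    refine dvd_add (Dvd.dvd.mul_right hp _) (Dvd.dvd.mul_left ?_ _)
    fin_cases i
    · show (xx - xx') ∣ (xx - xx)
      simp
    · show (xx - xx') ∣ (xx' - xx)
      exact ⟨-1, by ring⟩

lemma ker_ev {f : R2} (hf : evQ f = 0) : (xx - xx') ∣ f := by
  have h := dvd_sub_sigma f
  rwa [sigma_eq, AlgHom.comp_apply, hf, map_zero, sub_zero] at h

/-- For one variable, the endomorphism algebra of the invisible defect `I_W`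
(the even BRST cohomology of `End(I_W)`) is isomorphic as a `ℂ[x]`-algebra to the
Jacobian ring `ℂ[x]/(W')`.  Here `q = ∂^{x,x'}W = (W(x)-W(x'))/(x-x')` is the divided
difference, characterised by `hq`. -/
theorem end_invisible_defect_iso_jacobian (W : Polynomial ℂ) (q : R2)
    (hq : (xx - xx') * q = Polynomial.aeval xx W - Polynomial.aeval xx' W) :
    Nonempty ((evenCocycles q ⧸ evenCoboundaries q) ≃ₐ[Polynomial ℂ]
      (Polynomial ℂ ⧸ Ideal.span {Polynomial.derivative W})) := by
  classical
  set J := Ideal.span {Polynomial.derivative W} with hJ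
  -- q evaluates on the diagonal to W'
  obtain ⟨q0, hq0, hq0ev⟩ := dd W
  have hqq0 : q = q0 :=
    mul_left_cancel₀ (sub_ne_zero.mpr xx_ne) (by rw [hq, hq0])
  have hev_q : evQ q = Polynomial.derivative W := by rw [hqq0, hq0ev]
  -- the evaluation algebra homomorphism
  let Φ : evenCocycles q →ₐ[Polynomial ℂ] Polynomial ℂ ⧸ J :=
  { toRingHom := (Ideal.Quotient.mk J).comp (evQ.toRingHom.comp
      ((RingHom.fst R2 R2).comp (Subalgebra.val (evenCocycles q)).toRingHom)),
    commutes' := by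
      intro p
      show Ideal.Quotient.mk J (evQ ((algebraMap (Polynomial ℂ) (R2 × R2) p).1)) = _
      have h1 : (algebraMap (Polynomial ℂ) (R2 × R2) p).1 = jQ p := rfl
      rw [h1, ev_j, Ideal.Quotient.algebraMap_eq] }
  have hΦ : ∀ p : evenCocycles q, Φ p = Ideal.Quotient.mk J (evQ (p : R2 × R2).1) :=
    fun p => rfl
  -- diagonal elements are cocycles
  have hdiag : ∀ r : R2, (r, r) ∈ evenCocycles q := by
    intro r
    exact ⟨mul_comm r q, rfl⟩
  -- surjectivity
  have hsurj : Function.Surjective Φ := by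
    intro y
    obtain ⟨p, rfl⟩ := Ideal.Quotient.mk_surjective y
    exact ⟨⟨(jQ p, jQ p), hdiag _⟩, by rw [hΦ]; simp [ev_j]⟩
  -- kernel computation
  have hker : RingHom.ker Φ = evenCoboundaries q := by
    apply le_antisymm
    · -- ker ⊆ coboundaries
      intro p hp
      rw [RingHom.mem_ker, hΦ, Ideal.Quotient.eq_zero_iff_mem, hJ,
        Ideal.mem_span_singleton] at hp
      obtain ⟨c, hc⟩ := hp
      have hp2 : ((p : R2 × R2).2 : R2) = (p : R2 × R2).1 :=
        mul_left_cancel₀ (sub_ne_zero.mpr xx_ne) p.2.2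
      have hzero : evQ ((p : R2 × R2).1 - q * jQ c) = 0 := by
        rw [map_sub, map_mul, hev_q, ev_j, hc, sub_self]
      obtain ⟨h2, hh2⟩ := ker_ev hzero
      apply Ideal.subset_span
      refine ⟨jQ c, h2, ?_⟩
      have h1 : (p : R2 × R2).1 = q * jQ c + (xx - xx') * h2 := by
        linear_combination hh2
      exact Prod.ext h1 (hp2.trans h1)
    · -- coboundaries ⊆ ker
      rw [evenCoboundaries, Ideal.span_le]
      rintro z ⟨h1, h2, hz⟩
      simp only [SetLike.mem_coe, RingHom.mem_ker, hΦ, hz]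
      rw [Ideal.Quotient.eq_zero_iff_mem]
      have : evQ (q * h1 + (xx - xx') * h2)
          = Polynomial.derivative W * evQ h1 := by
        rw [map_add, map_mul, map_mul, hev_q, map_sub, ev_xx, ev_xx']
        ring
      rw [this, hJ]
      exact Ideal.mul_mem_right _ _ (Ideal.subset_span rfl)
  exact ⟨hker ▸ Ideal.quotientKerAlgEquivOfSurjective hsurj⟩
end

section
/- For the matrix factorisation d_X = σ_1 z_1 + σ_2 z_2 of V = z_1² + z_2² (with W = 0), the composite map Z = (ρ ∘ (1 ⊗ ev)) ∘ (coev ⊗ 1) ∘ λ^{−1} defined by the explicit formulas λ^{−1}(e_i) = Σ_{l≥0} Σ_{a_1<...<a_l} Σ_j θ_{a_1}...θ_{a_l} {σ_{a_l}...σ_{a_1}}_{ji} ⊗ e_j, ev(ν ⊗ η) = (i/4)(−1)^{|η|} ν(η)|_{z=0}, and coev(θ_{a_1}...θ_{a_l}) = Σ_{i,j} (−1)^{r(r+1)/2 + s} {σ_{b_1}...σ_{b_r}}_{ij} e_i ⊗ e_j^* (where θ_{a_1}...θ_{a_l}θ_{b_1}...θ_{b_r} = (−1)^s θ_1θ_2)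 is the identity map on X; i.e. the first Zorro move holds for this example. -/
open Matrix

/-- Pauli matrices `σ₁, σ₂`, indexed by `Fin 2` (index `0 ↔ σ₁`, `1 ↔ σ₂`). -/
def pauli : Fin 2 → Matrix (Fin 2) (Fin 2) ℂ
  | 0 => !![0, 1; 1, 0]
  | 1 => !![0, -Complex.I; Complex.I, 0]

/-- Ascending ordered product `σ_{a₁}⋯σ_{a_l}` over a subset `{a₁ < … < a_l}`. -/
noncomputable def prodAsc (S : Finset (Fin 2)) : Matrix (Fin 2) (Fin 2) ℂ :=
  ((S.sort (· ≤ ·)).map pauli).prod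

/-- Descending ordered product `σ_{a_l}⋯σ_{a₁}`. -/
noncomputable def prodDesc (S : Finset (Fin 2)) : Matrix (Fin 2) (Fin 2) ℂ :=
  ((S.sort (· ≤ ·)).reverse.map pauli).prod

/-- The sign `s` defined by `θ_{a₁}…θ_{a_l}θ_{b₁}…θ_{b_r} = (-1)^s θ₁θ₂`. -/
def invSign (S : Finset (Fin 2)) : ℕ :=
  ((S ×ˢ Sᶜ).filter fun p => p.2 < p.1).card

/-- The matrix of the Zorro composite
`Z = (ρ ∘ (1 ⊗ ev)) ∘ (coev ⊗ 1) ∘ λ⁻¹` for `d_X = σ₁z₁ + σ₂z₂`, obtained by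
substituting the explicit formulas
`λ⁻¹(e_i) = Σ_S Σ_j θ_{a₁}…θ_{a_l} {σ_{a_l}⋯σ_{a₁}}_{ji} ⊗ e_j`,
`coev(θ_{a₁}…θ_{a_l}) = Σ_{i',j'} (-1)^{r(r+1)/2+s}{σ_{b₁}⋯σ_{b_r}}_{i'j'} e_{i'} ⊗ e_{j'}^*`,
and `ev(e_{j'}^* ⊗ e_j) = (i/4)(-1)^{|e_j|} δ_{j'j}` (evaluated at `z = 0`);
the coefficient of `e_{i'}` in `Z(e_i)` is the `(i', i)`-entry. -/
noncomputable def zorroComposite : Matrix (Fin 2) (Fin 2) ℂ := fun i' i =>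
  ∑ S : Finset (Fin 2), ∑ j : Fin 2,
    (-1 : ℂ) ^ (Sᶜ.card * (Sᶜ.card + 1) / 2 + invSign S) *
      (prodAsc Sᶜ) i' j * (Complex.I / 4) * (-1 : ℂ) ^ (j : ℕ) * (prodDesc S) j i


/-!
Write `Γ = diag(1, -1)` for the grading operator `(-1)^{|e_j|}` of `X`. Then `Z` is `i/4` times
the sum over `S ⊆ {1, 2}` of `±σ_{Sᶜ, asc} Γ σ_{S, desc}`. Since `σ₁σ₂ = iΓ` and `Γ` anticommutes
with both Pauli matrices, each of the four summands equals `-i`, so `Z = (i/4)·4·(-i) = 1`.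
-/

open Complex

def parity : Matrix (Fin 2) (Fin 2) ℂ := diagonal fun j => (-1) ^ (j : ℕ)

lemma pauli_zero_mul_pauli_one : pauli 0 * pauli 1 = I • parity := by
  ext i j; fin_cases i <;> fin_cases j <;> simp [pauli, parity, Matrix.mul_apply]

lemma pauli_one_mul_pauli_zero : pauli 1 * pauli 0 = -I • parity := by
  ext i j; fin_cases i <;> fin_cases j <;> simp [pauli, parity, Matrix.mul_apply]

lemma pauli_mul_parity (a : Fin 2) : pauli a * parity = -(parity * pauli a) := by
  ext i j; fin_cases a <;> fin_cases i <;> fin_cases j <;> simp [pauli, parity]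

lemma parity_mul_parity : parity * parity = 1 := by
  simp [parity, diagonal_mul_diagonal, ← pow_add, ← diagonal_one]

lemma sort_zero_one : Finset.sort ({0, 1} : Finset (Fin 2)) (· ≤ ·) = [0, 1] := by
  rw [Finset.sort_insert (r := (· ≤ ·)) (by decide) (by decide), Finset.sort_singleton]

lemma prodAsc_empty : prodAsc ∅ = 1 := by simp [prodAsc]
lemma prodDesc_empty : prodDesc ∅ = 1 := by simp [prodDesc]
lemma prodAsc_singleton (a : Fin 2) : prodAsc {a} = pauli a := by simp [prodAsc]
lemma prodDesc_singleton (a : Fin 2) : prodDesc {a} = pauli a := by simp [prodDesc]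
lemma prodAsc_pair : prodAsc {0, 1} = pauli 0 * pauli 1 := by simp [prodAsc, sort_zero_one]
lemma prodDesc_pair : prodDesc {0, 1} = pauli 1 * pauli 0 := by simp [prodDesc, sort_zero_one]

/-- The contribution of the basis monomial `θ_S` of `I_V` to `zorroComposite`, up to `i/4`. -/
noncomputable def zorroSummand (S : Finset (Fin 2)) : Matrix (Fin 2) (Fin 2) ℂ :=
  (-1 : ℂ) ^ (Sᶜ.card * (Sᶜ.card + 1) / 2 + invSign S) • (prodAsc Sᶜ * parity * prodDesc S)

lemma zorroComposite_eq_sum : zorroComposite = (I / 4) • ∑ S, zorroSummand S := by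
  ext i' i
  simp only [zorroSummand, parity, zorroComposite, Matrix.smul_apply, Matrix.sum_apply,
    smul_eq_mul, Finset.mul_sum]
  simp only [Matrix.mul_apply (N := prodDesc _), Matrix.mul_diagonal, Finset.mul_sum]
  exact Finset.sum_congr rfl fun S _ => Finset.sum_congr rfl fun j _ => by ring

lemma zorroSummand_eq (S : Finset (Fin 2)) : zorroSummand S = -I • 1 := by
  have hcompl : (∅ : Finset (Fin 2))ᶜ = {0, 1} ∧ ({0} : Finset (Fin 2))ᶜ = {1} ∧
      ({1} : Finset (Fin 2))ᶜ = {0} ∧ ({0, 1} : Finset (Fin 2))ᶜ = ∅ := by decide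
  have hsign : invSign ∅ = 0 ∧ invSign {0} = 0 ∧ invSign {1} = 1 ∧ invSign {0, 1} = 0 := by
    decide
  obtain rfl | rfl | rfl | rfl : S = ∅ ∨ S = {0} ∨ S = {1} ∨ S = {0, 1} := by revert S; decide
  all_goals norm_num [zorroSummand, hcompl, hsign, prodAsc_empty, prodDesc_empty,
    prodAsc_singleton, prodDesc_singleton, prodAsc_pair, prodDesc_pair, mul_assoc,
    pauli_mul_parity, pauli_zero_mul_pauli_one, pauli_one_mul_pauli_zero, parity_mul_parity]

/-- The first Zorro move for the matrix factorisation `d_X = σ₁z₁ + σ₂z₂` of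
`V = z₁² + z₂²` (with `W = 0`): the composite
`Z = (ρ ∘ (1 ⊗ ev)) ∘ (coev ⊗ 1) ∘ λ⁻¹` is the identity map on `X`. -/
theorem zorro_move_pauli_example : zorroComposite = 1 := by
  rw [zorroComposite_eq_sum, Finset.sum_congr rfl fun S _ => zorroSummand_eq S, Finset.sum_const,
    Finset.card_univ, Fintype.card_finset, Fintype.card_fin, ← Nat.cast_smul_eq_nsmul ℂ,
    smul_smul, smul_smul]
  norm_num [← mul_assoc]
end
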